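/- Let n ≥ 1, λ ≥ 1, 0 < c ≤ 1, d_σ > 0. Let p_0 be a standard Gaussian random vector in ℝⁿ and let (ξ_t)_{t∈ℕ} be i.i.d. ℝⁿ-valued random vectors, independent of p_0, each distributed as the vector (N_{1:λ}, N_2, …, N_n) with independent coordinates, first coordinate distributed as the minimum of λ i.i.d. standard normals and the other n−1 coordinates standard normal. Define p_{t+1} = (1−c) p_t + √(c(2−c)) ξ_t and σ_{t+1} = σ_t · exp((c/(2 d_σ)) (‖p_{t+1}‖²/n − 1)). Then lim_{t→∞} E(ln(σ_{t+1}/σ_t)) = (1/(2 d_σ n)) (2(1−c) E(N_{1:λ})² + c (E(N_{1:λ}²) − 1)). -/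

import Mathlib

open MeasureTheory ProbabilityTheory Filter Real

/-- Law of the minimum (first order statistic) of `lam` i.i.d. standard normal
random variables. -/
noncomputable def minLaw (lam : ℕ) : Measure ℝ :=
  (Measure.pi fun _ : Fin lam => gaussianReal 0 1).map fun x => ⨅ i, x i

instance (lam : ℕ) : IsProbabilityMeasure (minLaw lam) := by
  unfold minLaw
  exact Measure.isProbabilityMeasure_map
    ((Measurable.iInf fun i => measurable_pi_apply i).aemeasurable)

/-- Law of the selected step `(N_{1:λ}, N_2, …, N_n)`: independent coordinates, the
first coordinate distributed as the minimum of `lam` i.i.d. standard normals and the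
other `n - 1` coordinates standard normal. -/
noncomputable def xiLaw (n lam : ℕ) : Measure (Fin n → ℝ) :=
  Measure.pi fun i => if (i : ℕ) = 0 then minLaw lam else gaussianReal 0 1

/-!
Each coordinate of the cumulative path is an AR(1) process
`X_{t+1} = (1 - c) X_t + √(c(2 - c)) ξ_{t+1}` whose innovation `ξ_{t+1}` is independent of the
past, so its mean and second moment obey affine recurrences with contraction factors `1 - c`
and `(1 - c)²`. Their fixed points give `E X_t² → 2(1 - c)/c · (E ξ)² + E ξ²`, which is `1` in the
`n - 1` standard normal coordinates and `2(1 - c)/c · E(N_{1:λ})² + E(N_{1:λ}²)` in the selected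
one. Finally `ln(σ_{t+1}/σ_t)` is exactly the exponent of the update rule, whose expectation is
affine in `∑ᵢ E (p_{t+1})ᵢ²`.
-/

open Topology

lemma tendsto_zero_of_le_mul_add {ρ : ℝ} (hρ0 : 0 ≤ ρ) (hρ1 : ρ < 1) {y v : ℕ → ℝ}
    (hy : ∀ t, 0 ≤ y t) (hv : Tendsto v atTop (𝓝 0)) (hrec : ∀ t, y (t + 1) ≤ ρ * y t + v t) :
    Tendsto y atTop (𝓝 0) := by
  refine tendsto_order.2 ⟨fun b hb => .of_forall fun t => hb.trans_le (hy t), fun ε hε => ?_⟩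
  obtain ⟨T, hT⟩ := eventually_atTop.1 <|
    hv.eventually (gt_mem_nhds (by nlinarith : 0 < (1 - ρ) * (ε / 2)))
  have hgeom : ∀ k, y (T + k) ≤ ρ ^ k * y T + ε / 2 := by
    intro k
    induction k with
    | zero => simp only [add_zero, pow_zero, one_mul]; linarith
    | succ k ih =>
      calc y (T + (k + 1)) ≤ ρ * y (T + k) + v (T + k) := hrec _
        _ ≤ ρ * (ρ ^ k * y T + ε / 2) + (1 - ρ) * (ε / 2) := by
          gcongr; exact (hT _ le_self_add).le
        _ = ρ ^ (k + 1) * y T + ε / 2 := by ring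
  have hpow : Tendsto (fun k => ρ ^ k * y T) atTop (𝓝 0) := by
    simpa using (tendsto_pow_atTop_nhds_zero_of_lt_one hρ0 hρ1).mul_const (y T)
  obtain ⟨K, hK⟩ := eventually_atTop.1 (hpow.eventually (gt_mem_nhds (half_pos hε)))
  refine eventually_atTop.2 ⟨T + K, fun t ht => ?_⟩
  obtain ⟨k, rfl⟩ := Nat.exists_eq_add_of_le (le_self_add.trans ht)
  linarith [hgeom k, hK k (by omega)]

lemma tendsto_of_affine_recurrence {E : Type*} [NormedAddCommGroup E] [NormedSpace ℝ E]
    {a : ℝ} (ha : |a| < 1) {x u : ℕ → E} {L : E} (hu : Tendsto u atTop (𝓝 L))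
    (hx : ∀ t, x (t + 1) = a • x t + u t) : Tendsto x atTop (𝓝 ((1 - a)⁻¹ • L)) := by
  have ha1 : 1 - a ≠ 0 := by linarith [le_abs_self a]
  set M := (1 - a)⁻¹ • L
  have hfix : a • M + L = M := by
    calc a • M + L = a • M + (1 - a) • M := by rw [smul_inv_smul₀ ha1]
      _ = M := by module
  rw [tendsto_iff_norm_sub_tendsto_zero] at hu ⊢
  refine tendsto_zero_of_le_mul_add (abs_nonneg a) ha (fun t => norm_nonneg _) hu fun t => ?_
  calc ‖x (t + 1) - M‖ = ‖a • (x t - M) + (u t - L)‖ := by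
        rw [hx, smul_sub]; conv_lhs => rw [← hfix]
        congr 1; abel
    _ ≤ |a| * ‖x t - M‖ + ‖u t - L‖ := by
        rw [← Real.norm_eq_abs, ← norm_smul]; exact norm_add_le _ _

lemma MeasureTheory.MeasurePreserving.integral_comp_of_aestronglyMeasurable {α β E : Type*}
    [MeasurableSpace α] [MeasurableSpace β] [NormedAddCommGroup E] [NormedSpace ℝ E]
    {μ : Measure α} {ν : Measure β} {f : α → β} (hf : MeasurePreserving f μ ν) {g : β → E}
    (hg : AEStronglyMeasurable g ν) : ∫ x, g (f x) ∂μ = ∫ y, g y ∂ν := by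
  rw [← hf.map_eq] at hg ⊢
  exact (integral_map hf.measurable.aemeasurable hg).symm

lemma abs_iInf_le_sum_abs {ι : Type*} [Fintype ι] (x : ι → ℝ) : |⨅ i, x i| ≤ ∑ i, |x i| := by
  cases isEmpty_or_nonempty ι with
  | inl _ => simp [Real.iInf_of_isEmpty]
  | inr _ =>
    obtain ⟨j, hj⟩ := Finite.exists_min x
    rw [le_antisymm (ciInf_le (Finite.bddBelow_range x) j) (le_ciInf hj)]
    exact Finset.single_le_sum (fun i _ => abs_nonneg (x i)) (Finset.mem_univ j)

lemma MeasureTheory.MemLp.iInf {α ι : Type*} [MeasurableSpace α] {μ : Measure α} [Fintype ι]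
    {p : ENNReal} {f : ι → α → ℝ} (hf : ∀ i, MemLp (f i) p μ) :
    MemLp (fun x => ⨅ i, f i x) p μ := by
  refine (memLp_finsetSum' Finset.univ fun i _ => (hf i).abs).of_le
    (AEMeasurable.iInf fun i => (hf i).aemeasurable).aestronglyMeasurable
    (.of_forall fun x => ?_)
  simpa [Finset.sum_apply, abs_of_nonneg (Finset.sum_nonneg fun i _ => abs_nonneg (f i x))]
    using abs_iInf_le_sum_abs fun i => f i x

lemma memLp_id_minLaw (lam : ℕ) (p : ENNReal) (hp : p ≠ ⊤) : MemLp id p (minLaw lam) := by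
  refine (memLp_map_measure_iff aestronglyMeasurable_id
    (Measurable.iInf fun i => measurable_pi_apply i).aemeasurable).2 (MemLp.iInf fun i => ?_)
  exact (memLp_id_gaussianReal' p hp).comp_measurePreserving (measurePreserving_eval _ i)

lemma integral_sq_gaussianReal_zero (v : NNReal) : ∫ x, x ^ 2 ∂gaussianReal 0 v = v := by
  simpa using (variance_of_integral_eq_zero (X := id) aemeasurable_id
    integral_id_gaussianReal).symm.trans variance_id_gaussianReal

section Autoregressive

variable {Ω : Type*} [MeasurableSpace Ω] {μ : Measure Ω}

lemma ProbabilityTheory.IndepFun.integral_sq_mul_add_mul [IsFiniteMeasure μ] {X W : Ω → ℝ}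
    (hXW : IndepFun X W μ) (hX : MemLp X 2 μ) (hW : MemLp W 2 μ) (a b : ℝ) :
    ∫ ω, (a * X ω + b * W ω) ^ 2 ∂μ =
      a ^ 2 * ∫ ω, X ω ^ 2 ∂μ + 2 * a * b * ((∫ ω, X ω ∂μ) * ∫ ω, W ω ∂μ) +
        b ^ 2 * ∫ ω, W ω ^ 2 ∂μ := by
  have hXW_int : Integrable (fun ω => X ω * W ω) μ :=
    hXW.integrable_mul (hX.integrable one_le_two) (hW.integrable one_le_two)
  have hX2 := hX.integrable_sq
  have hW2 := hW.integrable_sq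
  have hexpand : (fun ω => (a * X ω + b * W ω) ^ 2) = fun ω =>
      a ^ 2 * X ω ^ 2 + 2 * a * b * (X ω * W ω) + b ^ 2 * W ω ^ 2 := by
    ext ω; ring
  rw [hexpand, integral_add ((hX2.const_mul _).fun_add (hXW_int.const_mul _)) (hW2.const_mul _),
    integral_add (hX2.const_mul _) (hXW_int.const_mul _), integral_const_mul,
    integral_const_mul, integral_const_mul,
    ← hXW.integral_mul_eq_mul_integral hX.aestronglyMeasurable hW.aestronglyMeasurable]
  rfl

variable {a b : ℝ} {X ξ : ℕ → Ω → ℝ}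

lemma memLp_two_of_autoregressive (hX0 : MemLp (X 0) 2 μ) (hξ : ∀ t, MemLp (ξ (t + 1)) 2 μ)
    (hX : ∀ t ω, X (t + 1) ω = a * X t ω + b * ξ (t + 1) ω) (t : ℕ) : MemLp (X t) 2 μ := by
  induction t with
  | zero => exact hX0
  | succ t ih =>
    rw [show X (t + 1) = fun ω => a * X t ω + b * ξ (t + 1) ω from funext (hX t)]
    exact (ih.const_mul a).add ((hξ t).const_mul b)

lemma tendsto_integral_sq_of_autoregressive [IsFiniteMeasure μ] (ha : |a| < 1) {m s : ℝ}
    (hX0 : MemLp (X 0) 2 μ) (hξ : ∀ t, MemLp (ξ (t + 1)) 2 μ)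
    (hm : ∀ t, ∫ ω, ξ (t + 1) ω ∂μ = m) (hs : ∀ t, ∫ ω, ξ (t + 1) ω ^ 2 ∂μ = s)
    (hindep : ∀ t, IndepFun (X t) (ξ (t + 1)) μ)
    (hX : ∀ t ω, X (t + 1) ω = a * X t ω + b * ξ (t + 1) ω) :
    Tendsto (fun t => ∫ ω, X t ω ^ 2 ∂μ) atTop
      (𝓝 ((2 * a * b ^ 2 * m ^ 2 / (1 - a) + b ^ 2 * s) / (1 - a ^ 2))) := by
  have hL2 := memLp_two_of_autoregressive hX0 hξ hX
  have hint : ∀ t, Integrable (X t) μ := fun t => (hL2 t).integrable one_le_two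
  have hmean : Tendsto (fun t => ∫ ω, X t ω ∂μ) atTop (𝓝 ((1 - a)⁻¹ • (b * m))) := by
    refine tendsto_of_affine_recurrence ha tendsto_const_nhds fun t => ?_
    simp_rw [hX t, smul_eq_mul, ← hm t]
    rw [integral_add ((hint t).const_mul a) ((hξ t).integrable one_le_two |>.const_mul b),
      integral_const_mul, integral_const_mul]
  have ha2 : |a ^ 2| < 1 := by
    rw [abs_pow, sq_lt_one_iff₀ (abs_nonneg a)]; exact ha
  have hsecond := tendsto_of_affine_recurrence (x := fun t => ∫ ω, X t ω ^ 2 ∂μ) ha2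
    ((hmean.const_mul (2 * a * b * m)).add_const (b ^ 2 * s)) fun t => by
      simp_rw [hX t, (hindep t).integral_sq_mul_add_mul (hL2 t) (hξ t), hm, hs,
        smul_eq_mul]
      ring
  convert hsecond using 2
  have ha1 : 1 - a ≠ 0 := by linarith [le_abs_self a]
  have ha2' : 1 - a ^ 2 ≠ 0 := by nlinarith [abs_nonneg a, sq_abs a]
  simp only [smul_eq_mul]
  field_simp

end Autoregressive

lemma ProbabilityTheory.iIndepFun.indepFun_succ_of_measurable_natural {Ω β γ : Type*}
    [MeasurableSpace Ω] {μ : Measure Ω} [NormedAddCommGroup β] [MeasurableSpace β] [BorelSpace β] [MeasurableSpace γ]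
    {Z : ℕ → Ω → β} (hZ : ∀ t, StronglyMeasurable (Z t)) (hind : iIndepFun Z μ) {t : ℕ}
    {Y : Ω → γ} (hY : Measurable[Filtration.natural Z hZ t] Y) : IndepFun Y (Z (t + 1)) μ :=
  (IndepFun_iff_Indep _ _ _).2 <|
    indep_of_indep_of_le_left (hind.indep_comap_natural_of_lt hZ t.lt_succ_self).symm hY.comap_le

lemma measurable_natural_of_linear_recurrence {Ω ι : Type*} [MeasurableSpace Ω] [Fintype ι]
    {Z p : ℕ → Ω → ι → ℝ} (hZ : ∀ t, StronglyMeasurable (Z t)) {a b : ℝ} (hp0 : p 0 = Z 0)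
    (hp : ∀ t ω i, p (t + 1) ω i = a * p t ω i + b * Z (t + 1) ω i) (t : ℕ) :
    Measurable[Filtration.natural Z hZ t] (p t) := by
  induction t with
  | zero => rw [hp0]; exact (Filtration.stronglyAdapted_natural hZ 0).measurable
  | succ t ih =>
    have hZt := (Filtration.stronglyAdapted_natural hZ (t + 1)).measurable
    have hpt := ih.mono ((Filtration.natural Z hZ).mono t.le_succ) le_rfl
    rw [show p (t + 1) = fun ω => a • p t ω + b • Z (t + 1) ω from
      funext fun ω => funext (hp t ω)]
    exact (hpt.const_smul a).add (hZt.const_smul b)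

lemma log_div_eq_of_mul_exp {σ g : ℕ → ℝ} (h0 : σ 0 ≠ 0)
    (hσ : ∀ t, σ (t + 1) = σ t * exp (g t)) (t : ℕ) : log (σ (t + 1) / σ t) = g t := by
  have hne : ∀ t, σ t ≠ 0 := fun t => by
    induction t with
    | zero => exact h0
    | succ t ih => rw [hσ]; exact mul_ne_zero ih (exp_ne_zero _)
  rw [hσ, mul_div_cancel_left₀ _ (hne t), log_exp]

lemma integral_log_stepSize_ratio {Ω ι : Type*} [MeasurableSpace Ω] {μ : Measure Ω}
    [IsProbabilityMeasure μ] [Fintype ι] {σ : ℕ → Ω → ℝ} {X : ℕ → Ω → ι → ℝ} {α β : ℝ}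
    (hσ0 : ∀ ω, σ 0 ω ≠ 0)
    (hσ : ∀ t ω, σ (t + 1) ω = σ t ω * exp (α * ((∑ i, X t ω i ^ 2) / β - 1)))
    (t : ℕ) (hX : ∀ i, MemLp (fun ω => X t ω i) 2 μ) :
    ∫ ω, log (σ (t + 1) ω / σ t ω) ∂μ = α * ((∑ i, ∫ ω, X t ω i ^ 2 ∂μ) / β - 1) := by
  have hint : ∀ i, Integrable (fun ω => X t ω i ^ 2) μ := fun i => (hX i).integrable_sq
  simp only [fun ω => log_div_eq_of_mul_exp (σ := (σ · ω)) (hσ0 ω) (hσ · ω) t]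
  rw [integral_const_mul, integral_sub ((integrable_finsetSum _ fun i _ => hint i).div_const _)
    (integrable_const 1), integral_div, integral_finsetSum _ fun i _ => hint i]
  simp

lemma tendsto_integral_sq_cumulativePath {Ω ι : Type*} [MeasurableSpace Ω] {μ : Measure Ω}
    [IsFiniteMeasure μ] [Fintype ι] {Z p : ℕ → Ω → ι → ℝ} {c : ℝ} (hc0 : 0 < c) (hc2 : c < 2)
    {ν : ι → Measure ℝ} (hν : ∀ i, MemLp id 2 (ν i)) (hZ : ∀ t, Measurable (Z t))
    (hind : iIndepFun Z μ) (hZ0 : ∀ i, MemLp (fun ω => Z 0 ω i) 2 μ)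
    (hlaw : ∀ t i, MeasurePreserving (fun ω => Z (t + 1) ω i) μ (ν i)) (hp0 : p 0 = Z 0)
    (hp : ∀ t ω i, p (t + 1) ω i = (1 - c) * p t ω i + √(c * (2 - c)) * Z (t + 1) ω i)
    (i : ι) :
    Tendsto (fun t => ∫ ω, p t ω i ^ 2 ∂μ) atTop
      (𝓝 (2 * (1 - c) / c * (∫ x, x ∂ν i) ^ 2 + ∫ x, x ^ 2 ∂ν i)) := by
  have hZs : ∀ t, StronglyMeasurable (Z t) := fun t => (hZ t).stronglyMeasurable
  have hindep : ∀ t, IndepFun (fun ω => p t ω i) (fun ω => Z (t + 1) ω i) μ := fun t =>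
    (hind.indepFun_succ_of_measurable_natural hZs
      (measurable_natural_of_linear_recurrence hZs hp0 hp t)).comp
      (measurable_pi_apply i) (measurable_pi_apply i)
  have ha : |1 - c| < 1 := abs_lt.2 ⟨by linarith, by linarith⟩
  convert tendsto_integral_sq_of_autoregressive (X := fun t ω => p t ω i)
    (ξ := fun t ω => Z t ω i) ha (hp0 ▸ hZ0 i) (fun t => (hν i).comp_measurePreserving (hlaw t i))
    (fun t => (hlaw t i).integral_comp_of_aestronglyMeasurable
      continuous_id.aestronglyMeasurable)
    (fun t => (hlaw t i).integral_comp_of_aestronglyMeasurable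
      (continuous_pow 2).aestronglyMeasurable)
    hindep (fun t ω => hp t ω i) using 2
  have hq : 1 - (1 - c) ^ 2 = c * (2 - c) := by ring
  have h2c : 2 - c ≠ 0 := by linarith
  simp only [id, sub_sub_cancel, hq, sq_sqrt (by nlinarith : 0 ≤ c * (2 - c))]
  field_simp

theorem stmt_12_general {n lam : ℕ} (hn : 1 ≤ n)
    (c : ℝ) (hc0 : 0 < c) (hc1 : c ≤ 1) (d σ0 : ℝ) (hσ0 : 0 < σ0)
    {Ω : Type*} [MeasureSpace Ω] [IsProbabilityMeasure (ℙ : Measure Ω)]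
    (Z : ℕ → Ω → (Fin n → ℝ)) (hZmeas : ∀ t, Measurable (Z t))
    (hZindep : iIndepFun Z ℙ)
    (hZ0 : Measure.map (Z 0) ℙ = Measure.pi fun _ : Fin n => gaussianReal 0 1)
    (hZlaw : ∀ t, Measure.map (Z (t + 1)) ℙ = xiLaw n lam)
    (p : ℕ → Ω → (Fin n → ℝ)) (hp0 : p 0 = Z 0)
    (hprec : ∀ t ω i, p (t + 1) ω i =
      (1 - c) * p t ω i + Real.sqrt (c * (2 - c)) * Z (t + 1) ω i)
    (σ : ℕ → Ω → ℝ) (h0 : ∀ ω, σ 0 ω = σ0)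
    (hrec : ∀ t ω, σ (t + 1) ω =
      σ t ω * Real.exp ((c / (2 * d)) * ((∑ i, (p (t + 1) ω i) ^ 2) / n - 1)))
    :
    Tendsto (fun t : ℕ => ∫ ω, Real.log (σ (t + 1) ω / σ t ω) ∂ℙ) atTop
      (nhds ((1 / (2 * d * n)) * (2 * (1 - c) * (∫ x, x ∂(minLaw lam)) ^ 2 +
        c * ((∫ x, x ^ 2 ∂(minLaw lam)) - 1)))) := by
  obtain ⟨k, rfl⟩ : ∃ k, n = k + 1 := ⟨n - 1, by omega⟩
  set ν : Fin (k + 1) → Measure ℝ := fun i => if (i : ℕ) = 0 then minLaw lam else gaussianReal 0 1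
  have hν : ∀ i, IsProbabilityMeasure (ν i) := fun i => by
    simp only [ν]; split <;> infer_instance
  have hνL2 : ∀ i, MemLp id 2 (ν i) := fun i => by
    simp only [ν]; split
    exacts [memLp_id_minLaw lam 2 (by simp), memLp_id_gaussianReal' 2 (by simp)]
  have hZ0L2 : ∀ i, MemLp (fun ω => Z 0 ω i) 2 ℙ := fun i =>
    (memLp_id_gaussianReal' 2 (by simp)).comp_measurePreserving
      ((measurePreserving_eval _ i).comp ⟨hZmeas 0, hZ0⟩)
  have hZcoord : ∀ t i, MeasurePreserving (fun ω => Z (t + 1) ω i) ℙ (ν i) := fun t i =>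
    (measurePreserving_eval ν i).comp ⟨hZmeas _, hZlaw t⟩
  have hpL2 : ∀ t i, MemLp (fun ω => p t ω i) 2 ℙ := fun t i =>
    memLp_two_of_autoregressive (X := fun t ω => p t ω i) (ξ := fun t ω => Z t ω i)
      (hp0 ▸ hZ0L2 i) (fun t => (hνL2 i).comp_measurePreserving (hZcoord t i))
      (fun t ω => hprec t ω i) t
  have hlim := tendsto_finsetSum Finset.univ fun i _ => tendsto_integral_sq_cumulativePath hc0
    (by linarith) hνL2 hZmeas hZindep hZ0L2 hZcoord hp0 hprec i
  have hsum : ∑ i, (2 * (1 - c) / c * (∫ x, x ∂ν i) ^ 2 + ∫ x, x ^ 2 ∂ν i) =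
      2 * (1 - c) / c * (∫ x, x ∂minLaw lam) ^ 2 + ∫ x, x ^ 2 ∂minLaw lam + k := by
    simp [Fin.sum_univ_succ, ν, integral_id_gaussianReal, integral_sq_gaussianReal_zero]
  rw [hsum] at hlim
  convert (((hlim.comp (tendsto_add_atTop_nat 1)).div_const _).sub_const 1).const_mul (c / (2 * d))
    |>.congr fun t => (integral_log_stepSize_ratio (X := fun t => p (t + 1))
      (fun ω => h0 ω ▸ hσ0.ne') hrec t fun i => hpL2 (t + 1) i).symm using 2
  field_simp
  push_cast
  ring

/-- For the `(1,λ)`-CSA-ES with cumulation parameter `0 < c ≤ 1`,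
`lim_t E(ln(σ_{t+1}/σ_t)) = (1/(2 d_σ n)) (2(1−c) E(N_{1:λ})² + c (E(N_{1:λ}²) − 1))`. -/
theorem stmt_12 {n lam : ℕ} (hn : 1 ≤ n) (hlam : 1 ≤ lam)
    (c : ℝ) (hc0 : 0 < c) (hc1 : c ≤ 1) (d σ0 : ℝ) (hd : 0 < d) (hσ0 : 0 < σ0)
    {Ω : Type*} [MeasureSpace Ω] [IsProbabilityMeasure (ℙ : Measure Ω)]
    (Z : ℕ → Ω → (Fin n → ℝ)) (hZmeas : ∀ t, Measurable (Z t))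
    (hZindep : iIndepFun Z ℙ)
    (hZ0 : Measure.map (Z 0) ℙ = Measure.pi fun _ : Fin n => gaussianReal 0 1)
    (hZlaw : ∀ t, Measure.map (Z (t + 1)) ℙ = xiLaw n lam)
    (p : ℕ → Ω → (Fin n → ℝ)) (hp0 : p 0 = Z 0)
    (hprec : ∀ t ω i, p (t + 1) ω i =
      (1 - c) * p t ω i + Real.sqrt (c * (2 - c)) * Z (t + 1) ω i)
    (σ : ℕ → Ω → ℝ) (h0 : ∀ ω, σ 0 ω = σ0)
    (hrec : ∀ t ω, σ (t + 1) ω =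
      σ t ω * Real.exp ((c / (2 * d)) * ((∑ i, (p (t + 1) ω i) ^ 2) / n - 1)))
    :
    Tendsto (fun t : ℕ => ∫ ω, Real.log (σ (t + 1) ω / σ t ω) ∂ℙ) atTop
      (nhds ((1 / (2 * d * n)) * (2 * (1 - c) * (∫ x, x ∂(minLaw lam)) ^ 2 +
        c * ((∫ x, x ^ 2 ∂(minLaw lam)) - 1)))) :=
  stmt_12_general hn c hc0 hc1 d σ0 hσ0 Z hZmeas hZindep hZ0 hZlaw p hp0 hprec σ h0 hrec
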